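/- arXiv:1510.07154 — 7 statements merged into one kernel-verified Lean document; each statement's English description precedes it below -/
import Mathlib

section
/- Let ∂ be a derivation of a commutative ring A graded by an abelian group M, and suppose ∂ maps each homogeneous component into homogeneous elements. If f, h ∈ A are homogeneous with ∂f ≠ 0 and ∂h ≠ 0, then deg ∂(f) - deg f = deg ∂(h) - deg h. (Hence a homogeneous derivation has a well-defined degree.) -/
/-!
Differentiating `f * h` gives `∂(f h) = f ∂h + ∂f h`, which is homogeneous because `f h` is.
The two summands are nonzero (`A` is a domain) and homogeneous of degrees `deg f + deg ∂h` and
`deg ∂f + deg h`; a homogeneous sum of two nonzero homogeneous elements forces their degrees to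
agree, which is the claim after rearranging.
-/

open DirectSum

theorem DirectSum.eq_of_isHomogeneousElem_add {ι A σ : Type*} [DecidableEq ι] [AddCommMonoid A]
    [SetLike σ A] [AddSubmonoidClass σ A] (𝒜 : ι → σ) [Decomposition 𝒜] {x y : A} {m n : ι}
    (hx : x ∈ 𝒜 m) (hy : y ∈ 𝒜 n) (hx0 : x ≠ 0) (hy0 : y ≠ 0)
    (hxy : SetLike.IsHomogeneousElem 𝒜 (x + y)) : m = n := by
  by_contra hmn
  obtain ⟨k, hk⟩ := hxy
  have component_m : (decompose 𝒜 (x + y) m : A) = x := by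
    simp [decompose_of_mem_same 𝒜 hx, decompose_of_mem_ne 𝒜 hy (Ne.symm hmn)]
  have component_n : (decompose 𝒜 (x + y) n : A) = y := by
    simp [decompose_of_mem_same 𝒜 hy, decompose_of_mem_ne 𝒜 hx hmn]
  have hkm : k = m := by
    by_contra hkm
    exact hx0 (component_m ▸ decompose_of_mem_ne 𝒜 hk hkm)
  have hkn : k = n := by
    by_contra hkn
    exact hy0 (component_n ▸ decompose_of_mem_ne 𝒜 hk hkn)
  exact hmn (hkm.symm.trans hkn)

theorem stmt_2_general {A M : Type*} [CommRing A] [IsDomain A] [AddCommGroup M] [DecidableEq M]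
    (𝒜 : M → AddSubgroup A) [GradedRing 𝒜]
    (D : A → A)
    (hLeibniz : ∀ a b, D (a * b) = a * D b + D a * b)
    (hhom : ∀ (d : M) (a : A), a ∈ 𝒜 d → SetLike.IsHomogeneousElem 𝒜 (D a))
    (f h : A) (df dh df' dh' : M)
    (hf : f ∈ 𝒜 df) (hh : h ∈ 𝒜 dh)
    (hdf : D f ∈ 𝒜 df') (hdh : D h ∈ 𝒜 dh')
    (hf0 : D f ≠ 0) (hh0 : D h ≠ 0) :
    df' - df = dh' - dh := by
  have hD0 : D 0 = 0 := by simpa using hLeibniz 0 0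
  have hf_ne : f ≠ 0 := by rintro rfl; exact hf0 hD0
  have hh_ne : h ≠ 0 := by rintro rfl; exact hh0 hD0
  have hD_mul : SetLike.IsHomogeneousElem 𝒜 (f * D h + D f * h) :=
    hLeibniz f h ▸ hhom _ _ (SetLike.mul_mem_graded hf hh)
  have hdeg : df + dh' = df' + dh :=
    eq_of_isHomogeneousElem_add 𝒜 (SetLike.mul_mem_graded hf hdh)
      (SetLike.mul_mem_graded hdf hh) (mul_ne_zero hf_ne hh0) (mul_ne_zero hf0 hh_ne) hD_mul
  rw [sub_eq_sub_iff_add_eq_add, ← hdeg, add_comm]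

/-- Let `A` be an integral domain graded by an abelian group `M`, and `∂` a
derivation of `A` sending homogeneous elements to homogeneous elements.  If `f, h` are
homogeneous with `∂ f ≠ 0` and `∂ h ≠ 0`, then `deg ∂f - deg f = deg ∂h - deg h`
(so a homogeneous derivation has a well-defined degree). -/
theorem stmt_2 {A M : Type*} [CommRing A] [IsDomain A] [AddCommGroup M] [DecidableEq M]
    (𝒜 : M → AddSubgroup A) [GradedRing 𝒜]
    (D : A → A)
    (hadd : ∀ a b, D (a + b) = D a + D b)
    (hLeibniz : ∀ a b, D (a * b) = a * D b + D a * b)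
    (hhom : ∀ (d : M) (a : A), a ∈ 𝒜 d → SetLike.IsHomogeneousElem 𝒜 (D a))
    (f h : A) (df dh df' dh' : M)
    (hf : f ∈ 𝒜 df) (hh : h ∈ 𝒜 dh)
    (hdf : D f ∈ 𝒜 df') (hdh : D h ∈ 𝒜 dh')
    (hf0 : D f ≠ 0) (hh0 : D h ≠ 0) :
    df' - df = dh' - dh :=
  stmt_2_general 𝒜 D hLeibniz hhom f h df dh df' dh' hf hh hdf hdh hf0 hh0
end

section
/- Let e, e' ∈ ℤ^n be Demazure roots of the cone ℚ_{≥0}^n with distinguished rays ρ_e, ρ_{e'} and primitive vectors p_e, p_{e'}, and let ∂_e, ∂_{e'} be the corresponding monomial locally nilpotent derivations of K[x_1,...,x_n]. Then ∂_e ∘ ∂_{e'} = ∂_{e'} ∘ ∂_e if and only if either ρ_e = ρ_{e'} or ⟨p_e, e'⟩ = ⟨p_{e'}, e⟩ = 0. -/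
open MvPolynomial

/-- The monomial derivation `∂_e = (∏_{j ≠ i} x_j ^ c_j) ∂/∂x_i` of `K[x_1,…,x_n]`
attached to a Demazure root `e = (c_1,…,c_n)` with distinguished index `i`. -/
noncomputable def monD (K : Type*) [CommRing K] {n : ℕ} (i : Fin n) (c : Fin n → ℤ) :
    Derivation K (MvPolynomial (Fin n) K) (MvPolynomial (Fin n) K) :=
  MvPolynomial.mkDerivation K
    (fun j => if j = i then
        ∏ j' ∈ Finset.univ.erase i, (X j' : MvPolynomial (Fin n) K) ^ (c j').toNat
      else 0)

/-- The exponent finsupp of the monomial `∏_{j ≠ i} x_j ^ (c j).toNat`. -/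
noncomputable def sfun {n : ℕ} (i : Fin n) (c : Fin n → ℤ) : Fin n →₀ ℕ :=
  Finsupp.equivFunOnFinite.symm (fun j => if j = i then 0 else (c j).toNat)

@[simp] lemma sfun_apply {n : ℕ} (i : Fin n) (c : Fin n → ℤ) (j : Fin n) :
    sfun i c j = if j = i then 0 else (c j).toNat := rfl

lemma prod_eq_monomial (K : Type*) [CommRing K] {n : ℕ} (i : Fin n) (c : Fin n → ℤ) :
    (∏ j' ∈ Finset.univ.erase i, (X j' : MvPolynomial (Fin n) K) ^ (c j').toNat)
      = monomial (sfun i c) (1 : K) := by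
  rw [← prod_X_pow_eq_monomial]
  rw [show (∏ j' ∈ Finset.univ.erase i, (X j' : MvPolynomial (Fin n) K) ^ (c j').toNat)
      = ∏ j' ∈ Finset.univ.erase i, (X j' : MvPolynomial (Fin n) K) ^ (sfun i c j') from
    Finset.prod_congr rfl fun j hj => by
      rw [Finset.mem_erase] at hj; simp [hj.1]]
  refine (Finset.prod_subset ?_ ?_).symm
  · intro x hx
    rw [Finsupp.mem_support_iff] at hx
    rw [Finset.mem_erase]
    refine ⟨?_, Finset.mem_univ x⟩
    intro hxe
    exact hx (by simp [hxe])
  · intro x _ hx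
    rw [Finsupp.notMem_support_iff] at hx
    rw [hx, pow_zero]

lemma monD_monomial (K : Type*) [CommRing K] {n : ℕ} (i : Fin n) (c : Fin n → ℤ)
    (s : Fin n →₀ ℕ) :
    monD K i c (monomial s (1 : K)) =
      monomial (s - Finsupp.single i 1 + sfun i c) ((s i : K)) := by
  rw [monD, mkDerivation_monomial, one_smul, Finsupp.sum]
  rw [Finset.sum_eq_single i]
  · simp [prod_eq_monomial, monomial_mul]
  · intro j _ hj
    simp [hj]
  · intro hi
    rw [Finsupp.notMem_support_iff] at hi
    simp [hi]

lemma monD_X (K : Type*) [CommRing K] {n : ℕ} (i : Fin n) (c : Fin n → ℤ) (j : Fin n) :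
    monD K i c (X j) =
      if j = i then monomial (sfun i c) (1 : K) else 0 := by
  rw [monD, mkDerivation_X]
  split <;> simp [prod_eq_monomial]

/-- For Demazure roots `e, e'` of the cone `ℚ≥0^n` with distinguished rays
the `i`-th resp. `i'`-th coordinate rays (primitive vectors the standard basis vectors),
the derivations `∂_e, ∂_{e'}` commute iff the rays coincide or
`⟨p_e, e'⟩ = ⟨p_{e'}, e⟩ = 0`. -/
theorem stmt_3 (K : Type*) [Field K] [CharZero K] (n : ℕ) (i i' : Fin n)
    (c c' : Fin n → ℤ)
    (hci : c i = -1) (hc : ∀ j, j ≠ i → 0 ≤ c j)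
    (hci' : c' i' = -1) (hc' : ∀ j, j ≠ i' → 0 ≤ c' j) :
    (∀ f, monD K i c (monD K i' c' f) = monD K i' c' (monD K i c f)) ↔
      (i = i' ∨ (c' i = 0 ∧ c i' = 0)) := by
  constructor
  · intro h
    by_cases hii : i = i'
    · exact Or.inl hii
    right
    constructor
    · have h1 := h (X i')
      rw [monD_X, if_pos rfl, monD_X, if_neg (Ne.symm hii), map_zero, monD_monomial] at h1
      have h2 : ((sfun i' c' i : K)) = 0 := by
        by_contra hne
        exact hne (by simpa using (MvPolynomial.monomial_eq_zero.mp h1))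
      rw [sfun_apply, if_neg hii] at h2
      have h3 : (c' i).toNat = 0 := by exact_mod_cast h2
      have h4 := hc' i hii
      omega
    · have h1 := h (X i)
      rw [monD_X (K := K) i c, if_pos rfl, monD_X, if_neg hii, map_zero, monD_monomial] at h1
      have h2 : ((sfun i c i' : K)) = 0 := by
        by_contra hne
        exact hne (by simpa using (MvPolynomial.monomial_eq_zero.mp h1.symm))
      rw [sfun_apply, if_neg (Ne.symm hii)] at h2
      have h3 : (c i').toNat = 0 := by exact_mod_cast h2
      have h4 := hc i' (fun hh => hii hh.symm)
      omega
  · intro h f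
    have key : ∀ j : Fin n,
        monD K i c (monD K i' c' (X j)) = monD K i' c' (monD K i c (X j)) := by
      intro j
      rw [monD_X (K := K) i' c', monD_X (K := K) i c]
      have e1 : sfun i' c' i = 0 := by
        rcases h with h | h
        · simp [sfun_apply, h]
        · simp [sfun_apply, h.1]
      have e2 : sfun i c i' = 0 := by
        rcases h with h | h
        · simp [sfun_apply, ← h]
        · simp [sfun_apply, h.2]
      have z1 : monD K i c (monomial (sfun i' c') (1 : K)) = 0 := by
        rw [monD_monomial, e1]; simp
      have z2 : monD K i' c' (monomial (sfun i c) (1 : K)) = 0 := by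
        rw [monD_monomial, e2]; simp
      split <;> split <;> simp [z1, z2]
    have hD : ⁅monD K i c, monD K i' c'⁆ = 0 := by
      apply MvPolynomial.derivation_ext
      intro j
      rw [Derivation.commutator_apply]
      simp [key j]
    have := Derivation.congr_fun hD f
    rw [Derivation.commutator_apply] at this
    simpa [sub_eq_zero] using this
end

section
/- Let N be a lattice of rank n and e_1,...,e_n a complete collection of Demazure roots of a fan Σ in N⊗ℚ with distinguished primitive vectors p_1,...,p_n, i.e. ⟨p_i, e_j⟩ = -δ_{ij} for all i, j. Then p_1,...,p_n form a ℤ-basis of N and -e_1,...,-e_n is the dual basis of the dual lattice M. -/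
/-- The standard pairing between the lattice `N = ℤ^n` and its dual `M = ℤ^n`. -/
def dotp {n : ℕ} (p e : Fin n → ℤ) : ℤ := ∑ k, p k * e k

/-!
Put the `p_i` as the rows of a matrix `P` and the `-e_j` as the rows of `E`. The hypothesis says
`P Eᵀ = 1`; a one-sided inverse of a square matrix over a commutative ring is two-sided, so `P` is
invertible (its rows form a basis) and `Eᵀ P = 1`, which read in coordinates are the two expansion
formulas `v = ∑ ⟨v, -e_i⟩ p_i` and `m = ∑ ⟨p_j, m⟩ (-e_j)`.
-/

open Matrix

namespace Matrix

variable {ι R : Type*} [Fintype ι] [DecidableEq ι] [CommRing R] {A B : Matrix ι ι R}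

theorem exists_basis_eq_row_of_isUnit (hA : IsUnit A) :
    ∃ b : Module.Basis ι R (ι → R), ⇑b = A.row := by
  have hspan : ⊤ ≤ Submodule.span R (Set.range A.row) := by
    rw [← range_vecMulLinear, LinearMap.range_eq_top.mpr (vecMul_surjective_iff_isUnit.mpr hA)]
  exact ⟨.mk (linearIndependent_rows_of_isUnit hA) hspan, funext (Module.Basis.mk_apply _ _)⟩

theorem sum_dotProduct_smul_row (h : A * Bᵀ = 1) (v : ι → R) : ∑ i, (v ⬝ᵥ B i) • A i = v :=
  calc ∑ i, (v ⬝ᵥ B i) • A i = v ᵥ* Bᵀ ᵥ* A := by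
        rw [vecMul_transpose, vecMul_eq_sum]
        exact Finset.sum_congr rfl fun i _ ↦ by rw [dotProduct_comm]; rfl
    _ = v := by rw [vecMul_vecMul, mul_eq_one_comm.mp h, vecMul_one]

theorem sum_row_dotProduct_smul (h : A * Bᵀ = 1) (m : ι → R) : ∑ j, (A j ⬝ᵥ m) • B j = m :=
  calc ∑ j, (A j ⬝ᵥ m) • B j = Bᵀ *ᵥ (A *ᵥ m) := by
        rw [mulVec_transpose, vecMul_eq_sum]; rfl
    _ = m := by rw [mulVec_mulVec, mul_eq_one_comm.mp h, one_mulVec]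

end Matrix

/-- If `e_1, …, e_n` is a complete collection of Demazure roots with
distinguished primitive vectors `p_1, …, p_n`, i.e. `⟨p_i, e_j⟩ = -δ_{ij}`, then
`p_1, …, p_n` is a `ℤ`-basis of `N` and `-e_1, …, -e_n` is the dual basis of `M`. -/
theorem stmt_4 (n : ℕ) (p e : Fin n → Fin n → ℤ)
    (h : ∀ i j, dotp (p i) (e j) = if i = j then -1 else 0) :
    (∃ b : Module.Basis (Fin n) ℤ (Fin n → ℤ), ∀ i, b i = p i) ∧
    (∀ v : Fin n → ℤ, v = ∑ i, dotp v (-(e i)) • p i) ∧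
    (∀ m : Fin n → ℤ, m = ∑ j, dotp (p j) m • (-(e j))) := by
  set P : Matrix (Fin n) (Fin n) ℤ := Matrix.of p
  set E : Matrix (Fin n) (Fin n) ℤ := -Matrix.of e
  have hPE : P * Eᵀ = 1 := by
    ext i j
    have hentry : (P * Eᵀ) i j = -dotp (p i) (e j) := by
      simp [P, E, mul_apply, dotp]
    rw [hentry, h, one_apply]
    split_ifs <;> simp
  obtain ⟨b, hb⟩ := exists_basis_eq_row_of_isUnit (.of_mul_eq_one _ hPE)
  refine ⟨⟨b, fun i ↦ congrFun hb i⟩, fun v ↦ ?_, fun m ↦ ?_⟩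
  · exact (sum_dotProduct_smul_row hPE v).symm
  · exact (sum_row_dotProduct_smul hPE m).symm
end

section
/- Let e be a Demazure root of a cone σ ⊆ N⊗ℚ with distinguished ray ρ and primitive vector p_ρ. Then the derivation ∂_e of the semigroup algebra K[σ^∨ ∩ M] defined on monomials by ∂_e(χ^m) = ⟨p_ρ, m⟩ χ^{m+e} is a well-defined K-derivation. -/
/-- The additive monoid `σ^∨ ∩ M` of lattice points of the dual cone of the cone `σ`
generated by the (primitive generators of its) rays `p 0, …, p (m-1)`. -/
def dualConeM {n m : ℕ} (p : Fin m → Fin n → ℤ) : AddSubmonoid (Fin n → ℤ) where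
  carrier := {v | ∀ k, 0 ≤ dotp (p k) v}
  zero_mem' := by
    intro k
    simp [dotp]
  add_mem' := by
    intro a b ha hb k
    have : dotp (p k) (a + b) = dotp (p k) a + dotp (p k) b := by
      simp [dotp, mul_add, Finset.sum_add_distrib]
    rw [this]
    exact add_nonneg (ha k) (hb k)

/-!
A linear endomorphism `D` of a commutative monoid algebra `k[G]` is a derivation as soon as its
values `φ u = D χ^u` on monomials satisfy `φ (u + v) = χ^u φ v + φ u χ^v`. For
`φ v = ⟨p_ρ, v⟩ χ^{v+e}` this identity is just the additivity of `⟨p_ρ, ·⟩`, provided each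
`χ^{v+e}` that occurs makes sense in `K[σ^∨ ∩ M]`. The Demazure condition guarantees exactly this:
if `⟨p_ρ, v⟩ ≠ 0` then `⟨p_ρ, v⟩ ≥ 1` cancels `⟨p_ρ, e⟩ = -1`, while `⟨p_ρ', v + e⟩ ≥ 0` for every
other ray; and if `⟨p_ρ, v⟩ = 0` the term vanishes anyway.
-/

namespace AddMonoidAlgebra

section CommSemiring
variable {k G : Type*} [CommSemiring k] [AddCommMonoid G]

theorem single_eq_smul_single_one (v : G) (c : k) : single v c = c • single v (1 : k) := by
  rw [smul_single', mul_one]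

theorem linearMap_leibniz_of_single (D : AddMonoidAlgebra k G →ₗ[k] AddMonoidAlgebra k G)
    (hD : ∀ u v, D (single (u + v) 1) = single u 1 * D (single v 1) + D (single u 1) * single v 1)
    (a b : AddMonoidAlgebra k G) : D (a * b) = a * D b + D a * b := by
  induction a using induction_linear with
  | zero => simp
  | add x y hx hy => simp only [add_mul, map_add, hx, hy]; ring
  | single u c =>
    induction b using induction_linear with
    | zero => simp
    | add x y hx hy => simp only [mul_add, map_add, hx, hy]; ring
    | single v d =>
      rw [single_eq_smul_single_one u, single_eq_smul_single_one v, smul_mul_smul_comm,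
        single_mul_single, one_mul, map_smul, map_smul, map_smul, hD]
      simp only [smul_add, smul_mul_assoc, mul_smul_comm, smul_smul, mul_comm d c]

end CommSemiring

variable {k G : Type*} [CommRing k] [AddCommMonoid G]

noncomputable def mkDerivation (φ : G → AddMonoidAlgebra k G)
    (hφ : ∀ u v, φ (u + v) = single u 1 * φ v + φ u * single v 1) :
    Derivation k (AddMonoidAlgebra k G) (AddMonoidAlgebra k G) :=
  Derivation.mk' ((basis G k).constr k φ) fun a b => by
    rw [smul_eq_mul, smul_eq_mul, mul_comm b]
    refine linearMap_leibniz_of_single _ (fun u v => ?_) a b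
    simp only [← basis_apply, Module.Basis.constr_basis, hφ]

theorem mkDerivation_single (φ : G → AddMonoidAlgebra k G)
    (hφ : ∀ u v, φ (u + v) = single u 1 * φ v + φ u * single v 1) (v : G) (c : k) :
    mkDerivation φ hφ (single v c) = c • φ v := by
  rw [single_eq_smul_single_one, Derivation.map_smul, ← basis_apply]
  exact congrArg (c • ·) (Module.Basis.constr_basis _ _ _ _)

end AddMonoidAlgebra

theorem dotp_add {n : ℕ} (p a b : Fin n → ℤ) : dotp p (a + b) = dotp p a + dotp p b :=
  dotProduct_add p a b

theorem add_mem_dualConeM_of_dotp_ne_zero {n m : ℕ} {p : Fin m → Fin n → ℤ} {ρ : Fin m}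
    {e : Fin n → ℤ} (he : dotp (p ρ) e = -1) (he' : ∀ k, k ≠ ρ → 0 ≤ dotp (p k) e)
    {v : Fin n → ℤ} (hv : v ∈ dualConeM p) (hρv : dotp (p ρ) v ≠ 0) : v + e ∈ dualConeM p := by
  intro k
  rw [dotp_add]
  rcases eq_or_ne k ρ with rfl | hk
  · have : 0 < dotp (p k) v := (hv k).lt_of_ne' hρv
    omega
  · exact add_nonneg (hv k) (he' k hk)

namespace AddSubmonoid
variable (K : Type*) [Semiring K] {G : Type*} [AddCommMonoid G] (S : AddSubmonoid G)

open Classical in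
noncomputable def monomialOrZero (x : G) : AddMonoidAlgebra K S :=
  if h : x ∈ S then AddMonoidAlgebra.single ⟨x, h⟩ 1 else 0

variable {K S}

theorem monomialOrZero_of_mem {x : G} (h : x ∈ S) :
    S.monomialOrZero K x = AddMonoidAlgebra.single ⟨x, h⟩ 1 :=
  dif_pos h

theorem monomialOrZero_mul_single {x : G} (h : x ∈ S) (v : S) :
    S.monomialOrZero K x * AddMonoidAlgebra.single v 1 = S.monomialOrZero K (x + v) := by
  rw [monomialOrZero_of_mem h, monomialOrZero_of_mem (S.add_mem h v.2),
    AddMonoidAlgebra.single_mul_single, one_mul]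
  rfl

end AddSubmonoid

section Demazure
variable (K : Type*) [CommRing K] {n m : ℕ} (p : Fin m → Fin n → ℤ) (ρ : Fin m) (e : Fin n → ℤ)

/-- Off `σ^∨` the monomial `monomialOrZero` is `0`, but `v + e ∉ σ^∨` forces `⟨p_ρ, v⟩ = 0`, so
this junk value never shows. -/
noncomputable def demazureTerm (v : dualConeM p) : AddMonoidAlgebra K (dualConeM p) :=
  (dotp (p ρ) v : K) • (dualConeM p).monomialOrZero K (v + e)

variable {K p ρ e}

theorem demazureTerm_of_dotp_eq_zero {v : dualConeM p} (hv : dotp (p ρ) v = 0) :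
    demazureTerm K p ρ e v = 0 := by
  rw [demazureTerm, hv, Int.cast_zero, zero_smul]

theorem demazureTerm_of_mem {v : dualConeM p} (hve : (v : Fin n → ℤ) + e ∈ dualConeM p) :
    demazureTerm K p ρ e v =
      (dotp (p ρ) v : K) • AddMonoidAlgebra.single ⟨v + e, hve⟩ 1 := by
  rw [demazureTerm, AddSubmonoid.monomialOrZero_of_mem hve]

theorem demazureTerm_mul_single (he : dotp (p ρ) e = -1) (he' : ∀ k, k ≠ ρ → 0 ≤ dotp (p k) e)
    (u w : dualConeM p) :
    demazureTerm K p ρ e u * AddMonoidAlgebra.single w 1 =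
      (dotp (p ρ) u : K) • (dualConeM p).monomialOrZero K (u + w + e) := by
  rcases eq_or_ne (dotp (p ρ) u) 0 with hu | hu
  · rw [demazureTerm_of_dotp_eq_zero hu, zero_mul, hu, Int.cast_zero, zero_smul]
  · rw [demazureTerm, smul_mul_assoc, AddSubmonoid.monomialOrZero_mul_single
      (add_mem_dualConeM_of_dotp_ne_zero he he' u.2 hu), add_right_comm]

theorem demazureTerm_add (he : dotp (p ρ) e = -1) (he' : ∀ k, k ≠ ρ → 0 ≤ dotp (p k) e)
    (u v : dualConeM p) :
    demazureTerm K p ρ e (u + v) =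
      AddMonoidAlgebra.single u 1 * demazureTerm K p ρ e v +
        demazureTerm K p ρ e u * AddMonoidAlgebra.single v 1 := by
  rw [mul_comm, demazureTerm_mul_single he he', demazureTerm_mul_single he he',
    add_comm (v : Fin n → ℤ), ← add_smul, add_comm (dotp _ _ : K), ← Int.cast_add, ← dotp_add]
  rfl

variable (K) in
noncomputable def demazureDerivation (he : dotp (p ρ) e = -1)
    (he' : ∀ k, k ≠ ρ → 0 ≤ dotp (p k) e) :
    Derivation K (AddMonoidAlgebra K (dualConeM p)) (AddMonoidAlgebra K (dualConeM p)) :=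
  AddMonoidAlgebra.mkDerivation (demazureTerm K p ρ e) (demazureTerm_add he he')

theorem demazureDerivation_single (he : dotp (p ρ) e = -1)
    (he' : ∀ k, k ≠ ρ → 0 ≤ dotp (p k) e) (v : dualConeM p) :
    demazureDerivation K he he' (AddMonoidAlgebra.single v 1) = demazureTerm K p ρ e v := by
  rw [demazureDerivation, AddMonoidAlgebra.mkDerivation_single, one_smul]

end Demazure

theorem stmt_5_general (K : Type*) [Field K] (n m : ℕ)
    (p : Fin m → Fin n → ℤ) (ρ : Fin m) (e : Fin n → ℤ)
    (he : dotp (p ρ) e = -1) (he' : ∀ k, k ≠ ρ → 0 ≤ dotp (p k) e) :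
    (∀ v ∈ dualConeM p, dotp (p ρ) v ≠ 0 → v + e ∈ dualConeM p) ∧
    ∃ D : AddMonoidAlgebra K (dualConeM p) →ₗ[K] AddMonoidAlgebra K (dualConeM p),
      (∀ a b : AddMonoidAlgebra K (dualConeM p), D (a * b) = a * D b + D a * b) ∧
      ∀ (v : Fin n → ℤ) (hv : v ∈ dualConeM p),
        (dotp (p ρ) v = 0 →
          D (AddMonoidAlgebra.single (⟨v, hv⟩ : dualConeM p) (1 : K)) = 0) ∧
        ∀ hve : v + e ∈ dualConeM p,
          D (AddMonoidAlgebra.single (⟨v, hv⟩ : dualConeM p) (1 : K)) =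
            (dotp (p ρ) v : K) •
              AddMonoidAlgebra.single (⟨v + e, hve⟩ : dualConeM p) (1 : K) := by
  let D := demazureDerivation K he he'
  refine ⟨fun v hv => add_mem_dualConeM_of_dotp_ne_zero he he' hv, D.toLinearMap,
    fun a b => ?_, fun v hv => ⟨fun hv₀ => ?_, fun hve => ?_⟩⟩
  · change D (a * b) = a * D b + D a * b
    rw [Derivation.leibniz, smul_eq_mul, smul_eq_mul, mul_comm b]
  · exact (demazureDerivation_single he he' _).trans (demazureTerm_of_dotp_eq_zero hv₀)
  · exact (demazureDerivation_single he he' _).trans (demazureTerm_of_mem hve)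

/-- Let `e` be a Demazure root of a cone `σ` with distinguished ray `ρ`.
Then (i) for `m ∈ σ^∨ ∩ M` with `⟨p_ρ, m⟩ ≠ 0` also `m + e ∈ σ^∨ ∩ M`, and (ii) there is a
well-defined `K`-linear derivation `∂_e` of the semigroup algebra `K[σ^∨ ∩ M]` with
`∂_e(χ^m) = ⟨p_ρ, m⟩ χ^{m+e}` on monomials. -/
theorem stmt_5 (K : Type*) [Field K] [CharZero K] (n m : ℕ)
    (p : Fin m → Fin n → ℤ) (ρ : Fin m) (e : Fin n → ℤ)
    (he : dotp (p ρ) e = -1) (he' : ∀ k, k ≠ ρ → 0 ≤ dotp (p k) e) :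
    (∀ v ∈ dualConeM p, dotp (p ρ) v ≠ 0 → v + e ∈ dualConeM p) ∧
    ∃ D : AddMonoidAlgebra K (dualConeM p) →ₗ[K] AddMonoidAlgebra K (dualConeM p),
      (∀ a b : AddMonoidAlgebra K (dualConeM p), D (a * b) = a * D b + D a * b) ∧
      ∀ (v : Fin n → ℤ) (hv : v ∈ dualConeM p),
        (dotp (p ρ) v = 0 →
          D (AddMonoidAlgebra.single (⟨v, hv⟩ : dualConeM p) (1 : K)) = 0) ∧
        ∀ hve : v + e ∈ dualConeM p,
          D (AddMonoidAlgebra.single (⟨v, hv⟩ : dualConeM p) (1 : K)) =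
            (dotp (p ρ) v : K) •
              AddMonoidAlgebra.single (⟨v + e, hve⟩ : dualConeM p) (1 : K) :=
  stmt_5_general K n m p ρ e he he'
end

section
/- Let p_1,...,p_n be a basis of a lattice N ≅ ℤ^n and let p'_{r+1},...,p'_n and p''_1,...,p''_k be lattice vectors such that: (a) each p'_j (j > r) is a non-positive integer combination of p_1,...,p_n, (b) each p_j (j > r) is a non-positive integer combination of p_1,...,p_r, p'_{r+1},...,p'_n, and (c) p_1,...,p_r, p'_{r+1},...,p'_n is also a basis of N. Then, up to renumbering, for each j > r the vector p'_j has coordinate -1 at p_j and coordinate 0 at every p_s with s > r, s ≠ j, in the basis p_1,...,p_n. -/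
/-!
Fix `j ≥ r` and write `p_j = ∑ aᵢ qᵢ` with all `aᵢ ≤ 0`, where `qᵢ` runs over
`p_1, …, p_r, p'_{r+1}, …, p'_n`. Every `qᵢ` has non-positive `p_s`-coordinates for `s > r`,
so taking the `p_s`-coordinate writes `δ_{js}` as a sum of non-negative integers `aᵢ · (qᵢ)_s`.
For `s = j` exactly one term is `1`, which forces `aᵢ = (qᵢ)_j = -1`; for `s ≠ j` every term
vanishes, so `(qᵢ)_s = 0`. Such a `qᵢ` is some `p'_i`, and different `j` get different `i`
because of the `-1` in coordinate `j`; this injection of `{j > r}` into itself is the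
renumbering.
-/

open Module

theorem Int.exists_eq_neg_one_of_sum_mul_eq_one {ι : Type*} {s : Finset ι} {x y : ι → ℤ}
    (hx : ∀ i ∈ s, x i ≤ 0) (hy : ∀ i ∈ s, y i ≤ 0) (h : ∑ i ∈ s, x i * y i = 1) :
    ∃ i ∈ s, x i = -1 ∧ y i = -1 := by
  have hterm : ∀ i ∈ s, 0 ≤ x i * y i :=
    fun i hi => mul_nonneg_of_nonpos_of_nonpos (hx i hi) (hy i hi)
  obtain ⟨i, hi, hne⟩ := Finset.exists_ne_zero_of_sum_ne_zero (h ▸ one_ne_zero)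
  have hone : x i * y i = 1 :=
    le_antisymm (h ▸ Finset.single_le_sum hterm hi) (lt_of_le_of_ne (hterm i hi) hne.symm)
  have hneg : -x i * -y i = 1 := by rw [neg_mul_neg, hone]
  exact ⟨i, hi, by linarith [Int.eq_one_of_mul_eq_one_right (by linarith [hx i hi]) hneg],
    by linarith [Int.eq_one_of_mul_eq_one_left (by linarith [hy i hi]) hneg]⟩

section NonposCombination

variable {ι M : Type*} [Fintype ι] [AddCommGroup M] (b : Basis ι ℤ M) (q : ι → M) (S : Set ι)

theorem Module.Basis.exists_repr_eq_neg_one_of_eq_sum_nonpos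
    (hq : ∀ i, ∀ s ∈ S, b.repr (q i) s ≤ 0) {j : ι} (hj : j ∈ S) {a : ι → ℤ}
    (ha : ∀ i, a i ≤ 0) (hbj : b j = ∑ i, a i • q i) :
    ∃ i, b.repr (q i) j = -1 ∧ ∀ s ∈ S, s ≠ j → b.repr (q i) s = 0 := by
  classical
  have hcoord : ∀ s, (if j = s then 1 else 0) = ∑ i, a i * b.repr (q i) s := by
    intro s
    rw [← Finsupp.single_apply, ← b.repr_self, hbj, map_sum, Finsupp.finsetSum_apply]
    simp only [map_zsmul, Finsupp.smul_apply, smul_eq_mul]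
  have hterm : ∀ s ∈ S, ∀ i, 0 ≤ a i * b.repr (q i) s :=
    fun s hs i => mul_nonneg_of_nonpos_of_nonpos (ha i) (hq i s hs)
  obtain ⟨i, -, hai, hqij⟩ := Int.exists_eq_neg_one_of_sum_mul_eq_one
    (fun i _ => ha i) (fun i _ => hq i j hj) (by rw [← hcoord, if_pos rfl])
  refine ⟨i, hqij, fun s hs hsj => ?_⟩
  have hsum : ∑ i, a i * b.repr (q i) s = 0 := by rw [← hcoord, if_neg hsj.symm]
  have hzero := (Finset.sum_eq_zero_iff_of_nonneg fun i _ => hterm s hs i).mp hsum i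
    (Finset.mem_univ i)
  rw [hai, neg_one_mul, neg_eq_zero] at hzero
  exact hzero

theorem Module.Basis.exists_perm_repr_eq_neg_one
    (hq : ∀ i, ∀ s ∈ S, b.repr (q i) s ≤ 0) (hqS : ∀ i ∉ S, q i = b i)
    (hb : ∀ j ∈ S, ∃ a : ι → ℤ, (∀ i, a i ≤ 0) ∧ b j = ∑ i, a i • q i) :
    ∃ π : Equiv.Perm ι, (∀ i ∉ S, π i = i) ∧ ∀ j ∈ S,
      b.repr (q (π j)) j = -1 ∧ ∀ s ∈ S, s ≠ j → b.repr (q (π j)) s = 0 := by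
  classical
  have hmain : ∀ j : S, ∃ i : S, b.repr (q i) j = -1 ∧
      ∀ s ∈ S, s ≠ j → b.repr (q i) s = 0 := by
    rintro ⟨j, hj⟩
    obtain ⟨a, ha, hbj⟩ := hb j hj
    obtain ⟨i, hij, hoff⟩ := b.exists_repr_eq_neg_one_of_eq_sum_nonpos q S hq hj ha hbj
    have hiS : i ∈ S := by
      by_contra hiS
      rw [hqS i hiS, b.repr_self, Finsupp.single_eq_of_ne (by rintro rfl; exact hiS hj)] at hij
      exact absurd hij (by decide)
    exact ⟨⟨i, hiS⟩, hij, hoff⟩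
  choose σ hσj hσs using hmain
  have hσ : Function.Injective σ := by
    intro x y hxy
    by_contra hne
    have := hσs y x x.2 (Subtype.coe_injective.ne hne)
    rw [← hxy, hσj x] at this
    exact absurd this (by decide)
  refine ⟨Equiv.Perm.ofSubtype (Equiv.ofBijective σ (Finite.injective_iff_bijective.mp hσ)),
    fun i hi => Equiv.Perm.ofSubtype_apply_of_not_mem _ hi, fun j hj => ?_⟩
  rw [Equiv.Perm.ofSubtype_apply_of_mem _ hj, Equiv.ofBijective_apply]
  exact ⟨hσj ⟨j, hj⟩, hσs ⟨j, hj⟩⟩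

end NonposCombination

theorem stmt_8_general (n r : ℕ) (b : Module.Basis (Fin n) ℤ (Fin n → ℤ))
    (p' : Fin n → Fin n → ℤ)
    (ha : ∀ j : Fin n, r ≤ (j : ℕ) → ∀ i, b.repr (p' j) i ≤ 0)
    (hb : ∀ j : Fin n, r ≤ (j : ℕ) → ∃ a : Fin n → ℤ, (∀ i, a i ≤ 0) ∧
      (b j : Fin n → ℤ) = ∑ i, a i • (if (i : ℕ) < r then b i else p' i)) :
    ∃ π : Equiv.Perm (Fin n), (∀ i : Fin n, (i : ℕ) < r → π i = i) ∧
      ∀ j : Fin n, r ≤ (j : ℕ) →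
        b.repr (p' (π j)) j = -1 ∧
        ∀ s : Fin n, r ≤ (s : ℕ) → s ≠ j → b.repr (p' (π j)) s = 0 := by
  set q : Fin n → Fin n → ℤ := fun i => if (i : ℕ) < r then b i else p' i
  have hq : ∀ i, ∀ s ∈ {s : Fin n | r ≤ (s : ℕ)}, b.repr (q i) s ≤ 0 := by
    intro i s hs
    by_cases hi : (i : ℕ) < r
    · simp only [q, if_pos hi, b.repr_self]
      rw [Finsupp.single_eq_of_ne (by rintro rfl; exact absurd hs (not_le.mpr hi))]
    · simpa only [q, if_neg hi] using ha i (not_lt.mp hi) s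
  obtain ⟨π, hfix, hπ⟩ := b.exists_perm_repr_eq_neg_one q {s | r ≤ (s : ℕ)} hq
    (fun i hi => if_pos (not_le.mp hi)) hb
  refine ⟨π, fun i hi => hfix i (not_le.mpr hi), fun j hj => ?_⟩
  have hπj : ¬ (π j : ℕ) < r := by
    intro hlt
    have : π j = j := π.injective (hfix (π j) (not_le.mpr hlt))
    omega
  have := hπ j hj
  simp only [q, if_neg hπj] at this
  exact this

/-- Let `p_1, …, p_n` (the basis `b`) be a basis of `N ≅ ℤ^n`, and let
`p'_j` (for `r ≤ j`) and `p''_1, …, p''_k` be lattice vectors such that (a) each `p'_j`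
is a non-positive integer combination of `p_1, …, p_n`, (b) each `p_j` with `r ≤ j` is a
non-positive integer combination of `p_1, …, p_r, p'_{r+1}, …, p'_n`, and (c)
`p_1, …, p_r, p'_{r+1}, …, p'_n` is also a basis of `N`.  Then, up to renumbering, for
each `j ≥ r` the vector `p'_j` has coordinate `-1` at `p_j` and coordinate `0` at every
`p_s` with `s ≥ r`, `s ≠ j`. -/
theorem stmt_8 (n r k : ℕ) (b : Module.Basis (Fin n) ℤ (Fin n → ℤ))
    (p' : Fin n → Fin n → ℤ) (p'' : Fin k → Fin n → ℤ)
    (ha : ∀ j : Fin n, r ≤ (j : ℕ) → ∀ i, b.repr (p' j) i ≤ 0)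
    (hb : ∀ j : Fin n, r ≤ (j : ℕ) → ∃ a : Fin n → ℤ, (∀ i, a i ≤ 0) ∧
      (b j : Fin n → ℤ) = ∑ i, a i • (if (i : ℕ) < r then b i else p' i))
    (hc : ∃ b' : Module.Basis (Fin n) ℤ (Fin n → ℤ),
      ∀ i : Fin n, b' i = if (i : ℕ) < r then b i else p' i) :
    ∃ π : Equiv.Perm (Fin n), (∀ i : Fin n, (i : ℕ) < r → π i = i) ∧
      ∀ j : Fin n, r ≤ (j : ℕ) →
        b.repr (p' (π j)) j = -1 ∧
        ∀ s : Fin n, r ≤ (s : ℕ) → s ≠ j → b.repr (p' (π j)) s = 0 :=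
  stmt_8_general n r b p' ha hb
end

section
/- Let K[x_1,...,x_m] be graded by ℤ^{m-n} (0 < n < m) with deg x_i = w_i, such that w_1,...,w_{m-n} form a ℤ-basis of ℤ^{m-n} and each w_j for j > m-n is a non-positive integer combination of w_1,...,w_{m-n}. Let the torus T = (K^×)^{m-n} act on K^m by t · x = (χ^{w_1}(t)x_1, ..., χ^{w_m}(t)x_m), and let G_a^n act by x_{m-n+i} ↦ x_{m-n+i} + s_i · (monomial in x_1,...,x_{m-n} of degree -w_{m-n+i}) for i = 1,...,n. Then the stabilizer of the point (1,1,...,1) ∈ K^m in the group G_a^n × T is trivial, and hence its orbit is open (dense) in K^m. -/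
/-!
Since `w_1, …, w_q` is a basis of `ℤ^q`, the map `t ↦ (χ^{w_k}(t))_k` is an automorphism of the
torus `(K^×)^q`, and the torus acts on the first `q` coordinates exactly through it. Hence a
stabilising `t` is trivial, and the torus reaches every point whose first `q` coordinates are
nonzero. On the remaining coordinates `s_i` translates by `s_i` times a monomial in the (nonzero)
first coordinates, so `s = 0` on the stabiliser and every value of `x_{q+i}` is reached.
-/

theorem bijective_prod_zpow_basis {G ι κ : Type*} [CommGroup G] [Fintype ι]
    (b : Module.Basis κ ℤ (ι → ℤ)) :
    Function.Bijective fun (t : ι → G) (k : κ) => ∏ j, t j ^ b k j := by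
  -- `G^ι ≅ Hom(ℤ^ι, G)`, followed by restriction of homomorphisms to the basis `b`
  let e : (ι → G) ≃ (κ → G) :=
    ((Equiv.piCongrRight fun _ => Additive.ofMul).trans
      ((Module.piEquiv ι ℤ (Additive G)).trans (b.constr ℤ).symm).toEquiv).trans
      (Equiv.piCongrRight fun _ => Additive.toMul)
  convert e.bijective using 1
  ext t k
  simp [e, Module.piEquiv_apply_apply, toMul_sum]

/-- Let `K[x_1, …, x_m]` (`m = q + n`, `q = m - n`) be graded by `ℤ^q`
with `deg x_j = w j`, where `w` of the first `q` variables forms a `ℤ`-basis of `ℤ^q` and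
each remaining `w (q+i) = -∑_k a i k • w k` is a non-positive integer combination of the
basis (`a i k ∈ ℕ`).  Let the torus `T = (K^×)^q` act by `t · x = (χ^{w_j}(t) x_j)_j` and
`G_a^n` act by `x_{q+i} ↦ x_{q+i} + s_i ∏_k x_k^{a i k}` (the monomial in
`x_1, …, x_q` of degree `-w_{q+i}`); `act s t x` is the composite `s · (t · x)`.  Then the
stabilizer of `(1, …, 1)` in `G_a^n × T` is trivial, and its orbit is the (Zariski open
dense) set where the first `q` coordinates are nonzero. -/
theorem stmt_16 (K : Type*) [Field K]
    (q n : ℕ)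
    (w : Fin (q + n) → Fin q → ℤ) (a : Fin n → Fin q → ℕ)
    (hbasis : ∃ b : Module.Basis (Fin q) ℤ (Fin q → ℤ), ∀ k : Fin q, b k = w (Fin.castAdd n k)) :
    let χ : (Fin q → Kˣ) → (Fin q → ℤ) → Kˣ := fun t v => ∏ k, t k ^ v k
    let act : (Fin n → K) → (Fin q → Kˣ) → (Fin (q + n) → K) → Fin (q + n) → K :=
      fun s t x j =>
        if h : (j : ℕ) < q then (χ t (w j) : K) * x j
        else (χ t (w j) : K) * x j +
          s ⟨(j : ℕ) - q, by have := j.isLt; omega⟩ *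
            ∏ k : Fin q, ((χ t (w (Fin.castAdd n k)) : K) * x (Fin.castAdd n k)) ^
              (a ⟨(j : ℕ) - q, by have := j.isLt; omega⟩ k)
    (∀ (s : Fin n → K) (t : Fin q → Kˣ),
      act s t (fun _ => 1) = (fun _ => 1) → s = 0 ∧ t = 1) ∧
    ({x | ∃ s t, x = act s t fun _ => 1}
      = {x : Fin (q + n) → K | ∀ k : Fin q, x (Fin.castAdd n k) ≠ 0}) := by
  intro χ act
  obtain ⟨b, hb⟩ := hbasis
  have hχ (t : Fin q → Kˣ) (k : Fin q) : χ t (w (Fin.castAdd n k)) = ∏ j, t j ^ b k j := by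
    rw [hb]
  have act_castAdd (s t) (k : Fin q) :
      act s t (fun _ => 1) (Fin.castAdd n k) = χ t (w (Fin.castAdd n k)) := by
    simp [act]
  have act_natAdd (s t) (i : Fin n) : act s t (fun _ => 1) (Fin.natAdd q i) =
      χ t (w (Fin.natAdd q i)) + s i * ∏ k, (χ t (w (Fin.castAdd n k)) : K) ^ a i k := by
    simp [act]
  refine ⟨fun s t h => ?_, ?_⟩
  · obtain rfl : t = 1 := (bijective_prod_zpow_basis b).1 <| funext fun k => by
      have := congrFun h (Fin.castAdd n k)
      rw [act_castAdd, hχ] at this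
      simpa using Units.val_eq_one.mp this
    refine ⟨funext fun i => ?_, rfl⟩
    simpa [act_natAdd, χ] using congrFun h (Fin.natAdd q i)
  · ext x
    refine ⟨?_, fun hx => ?_⟩
    · rintro ⟨s, t, rfl⟩ k
      simp [act_castAdd]
    · obtain ⟨t, ht⟩ := (bijective_prod_zpow_basis b).2 fun k => Units.mk0 _ (hx k)
      have hχx (k : Fin q) : (χ t (w (Fin.castAdd n k)) : K) = x (Fin.castAdd n k) := by
        rw [hχ]
        exact congrArg Units.val (congrFun ht k)
      let s : Fin n → K := fun i =>
        (x (Fin.natAdd q i) - χ t (w (Fin.natAdd q i))) / ∏ k, x (Fin.castAdd n k) ^ a i k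
      refine ⟨s, t, funext fun j => Eq.symm ?_⟩
      induction j using Fin.addCases with
      | left k => rw [act_castAdd, hχx]
      | right i =>
        have hmonomial : ∏ k, x (Fin.castAdd n k) ^ a i k ≠ 0 :=
          Finset.prod_ne_zero_iff.2 fun k _ => pow_ne_zero _ (hx k)
        rw [act_natAdd]
        simp only [hχx, s, div_mul_cancel₀ _ hmonomial, add_sub_cancel]
end

section
/- Let e be a Demazure root of a fan Σ with distinguished ray ρ, and let σ_1, σ_2 ∈ Σ with σ_1 a face of σ_2. Suppose e is ≤ 0 on σ_2 and σ_1 = σ_2 ∩ {v : ⟨v, e⟩ = 0} is a facet of σ_2. Then ρ is a ray of σ_2 and ρ is not contained in σ_1, and σ_2 is generated by σ_1 and ρ. -/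
lemma eval_sum {n m : ℕ} (p : Fin m → Fin n → ℤ) (e : Fin n → ℤ) (c : Fin m → ℚ) :
    (∑ i, (∑ k, c k • fun i => ((p k i : ℚ))) i * (e i : ℚ))
      = ∑ k, c k * (dotp (p k) e : ℚ) := by
  simp only [Finset.sum_apply, Pi.smul_apply, smul_eq_mul, dotp]
  push_cast
  simp_rw [Finset.sum_mul]
  rw [Finset.sum_comm]
  simp_rw [Finset.mul_sum]
  exact Finset.sum_congr rfl fun k _ => Finset.sum_congr rfl fun i _ => by ring

lemma single_smul {n m : ℕ} (p : Fin m → Fin n → ℤ) (ρ : Fin m) (c : ℚ) :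
    (c • fun i => ((p ρ i : ℚ)))
      = ∑ k, (if k = ρ then c else 0) • fun i => ((p k i : ℚ)) := by
  rw [Finset.sum_eq_single ρ]
  · simp
  · intro j _ hj; simp [hj]
  · simp

/-- Let `e` be a Demazure root of a fan `𝒮` (whose cones are the
conical hulls of subsets of the ray generators `p 0, …, p (m-1)`) with distinguished ray
`ρ`, including the extra root condition (2).  Let `σ₁, σ₂` be cones of the fan with `σ₁`
a face of `σ₂`, `e ≤ 0` on `σ₂`, and `σ₁ = σ₂ ∩ {⟨·, e⟩ = 0}` a facet of `σ₂`.  Then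
`p_ρ` lies in `σ₂`, not in `σ₁`, and `σ₂` is generated by `σ₁` and the ray of `p_ρ`. -/
theorem stmt_17 (n m : ℕ) (p : Fin m → Fin n → ℤ)
    (𝒮 : Set (Set (Fin n → ℚ)))
    (hcones : ∀ σ ∈ 𝒮, ∃ I : Finset (Fin m),
      σ = {v | ∃ c : Fin m → ℚ, (∀ k, 0 ≤ c k) ∧ (∀ k ∉ I, c k = 0) ∧
        v = ∑ k, c k • fun i => ((p k i : ℚ))})
    (ρ : Fin m) (e : Fin n → ℤ)
    (hroot1 : dotp (p ρ) e = -1)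
    (hroot2 : ∀ k, k ≠ ρ → 0 ≤ dotp (p k) e)
    (hroot3 : ∀ σ ∈ 𝒮, (∀ v ∈ σ, (∑ i, v i * (e i : ℚ)) = 0) →
      {x | ∃ w ∈ σ, ∃ c : ℚ, 0 ≤ c ∧ x = w + c • fun i => ((p ρ i : ℚ))} ∈ 𝒮)
    (σ1 σ2 : Set (Fin n → ℚ)) (hσ1 : σ1 ∈ 𝒮) (hσ2 : σ2 ∈ 𝒮)
    (hface : σ1 ⊆ σ2)
    (hneg : ∀ v ∈ σ2, (∑ i, v i * (e i : ℚ)) ≤ 0)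
    (heq : σ1 = {v ∈ σ2 | (∑ i, v i * (e i : ℚ)) = 0})
    (hproper : σ1 ≠ σ2)
    (hfacet : Module.finrank ℚ ↥(Submodule.span ℚ σ1) + 1
      = Module.finrank ℚ ↥(Submodule.span ℚ σ2)) :
    (fun i => ((p ρ i : ℚ))) ∈ σ2 ∧
    (fun i => ((p ρ i : ℚ))) ∉ σ1 ∧
    σ2 = {x | ∃ w ∈ σ1, ∃ c : ℚ, 0 ≤ c ∧ x = w + c • fun i => ((p ρ i : ℚ))} := by
  obtain ⟨I, hI⟩ := hcones σ2 hσ2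
  -- generators are in σ2
  have hgen : ∀ k ∈ I, (fun i => ((p k i : ℚ))) ∈ σ2 := by
    intro k hk
    rw [hI]
    refine ⟨fun j => if j = k then 1 else 0, fun j => by positivity,
      fun j hj => if_neg (by rintro rfl; exact hj hk), ?_⟩
    rw [Finset.sum_eq_single k]
    · simp
    · intro j _ hj; simp [hj]
    · simp
  have hcast : ∀ k, (∑ i, ((p k i : ℚ)) * (e i : ℚ)) = (dotp (p k) e : ℚ) := by
    intro k; rw [dotp]; push_cast; rfl
  -- generators other than ρ pair to zero with e
  have hzero : ∀ k ∈ I, k ≠ ρ → dotp (p k) e = 0 := by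
    intro k hk hkρ
    have h1 := hneg _ (hgen k hk)
    rw [hcast k] at h1
    exact le_antisymm (by exact_mod_cast h1) (hroot2 k hkρ)
  -- ρ ∈ I
  have hρI : ρ ∈ I := by
    by_contra hρI
    apply hproper
    apply Set.Subset.antisymm hface
    intro v hv
    have hv' := hv
    rw [hI] at hv'
    obtain ⟨c, hc0, hcsupp, hcv⟩ := hv'
    rw [heq]
    refine ⟨hv, ?_⟩
    rw [hcv, eval_sum]
    refine Finset.sum_eq_zero fun k _ => ?_
    by_cases hk : k ∈ I
    · have : dotp (p k) e = 0 := hzero k hk (fun h => hρI (h ▸ hk))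
      simp [this]
    · simp [hcsupp k hk]
  have hρσ2 : (fun i => ((p ρ i : ℚ))) ∈ σ2 := hgen ρ hρI
  have hρe : (∑ i, ((p ρ i : ℚ)) * (e i : ℚ)) = -1 := by
    rw [hcast ρ, hroot1]; norm_num
  refine ⟨hρσ2, ?_, ?_⟩
  · intro h
    rw [heq] at h
    have h2 := h.2
    simp only [hρe] at h2
    norm_num at h2
  · apply Set.Subset.antisymm
    · -- σ2 ⊆ σ1 + ℚ≥0 pρ
      intro v hv
      rw [hI] at hv
      obtain ⟨c, hc0, hcsupp, hcv⟩ := hv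
      have hwσ2 : (∑ k, (if k = ρ then 0 else c k) • fun i => ((p k i : ℚ))) ∈ σ2 := by
        rw [hI]
        refine ⟨fun k => if k = ρ then 0 else c k,
          fun k => by by_cases h : k = ρ <;> simp [h, hc0 k],
          fun k hk => by simp [hcsupp k hk], rfl⟩
      have hwσ1 : (∑ k, (if k = ρ then 0 else c k) • fun i => ((p k i : ℚ))) ∈ σ1 := by
        rw [heq]
        refine ⟨hwσ2, ?_⟩
        rw [eval_sum]
        refine Finset.sum_eq_zero fun k _ => ?_
        by_cases hkρ : k = ρ
        · simp [hkρ]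
        · by_cases hk : k ∈ I
          · simp [hkρ, hzero k hk hkρ]
          · simp [hcsupp k hk]
      refine ⟨_, hwσ1, c ρ, hc0 ρ, ?_⟩
      rw [hcv, single_smul p ρ (c ρ), ← Finset.sum_add_distrib]
      refine Finset.sum_congr rfl fun k _ => ?_
      by_cases h : k = ρ <;> simp [h]
    · -- σ1 + ℚ≥0 pρ ⊆ σ2
      rintro x ⟨w, hwσ1, c, hc0, rfl⟩
      have hw2 := hface hwσ1
      rw [hI] at hw2 ⊢
      obtain ⟨d, hd0, hdsupp, hdw⟩ := hw2
      refine ⟨fun k => d k + if k = ρ then c else 0,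
        fun k => add_nonneg (hd0 k) (by by_cases h : k = ρ <;> simp [h, hc0]),
        fun k hk => by
          have hne : k ≠ ρ := fun h => hk (h ▸ hρI)
          simp [hdsupp k hk, hne], ?_⟩
      rw [hdw, single_smul p ρ c, ← Finset.sum_add_distrib]
      exact Finset.sum_congr rfl fun k _ => by rw [add_smul]
end
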